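/- arXiv:1706.06997 — 8 statements merged into one kernel-verified Lean document; each statement's English description precedes it below -/
import Mathlib

section
/- Let p be an odd prime and m ≥ 2. For every a ∈ F_{p^m} that does not lie in the prime subfield F_p, the number of d ∈ D(0) with Tr(a·d) ≠ 0 equals p^{m-2}(p-1). (That is, the codeword c(a) of the linear code C_{D(0)} has Hamming weight p^{m-2}(p-1).) -/
/-!
The map `d ↦ (Tr d, Tr (a d))` from `F` to `𝔽_p²` is `𝔽_p`-linear, and it is onto: otherwise some
nontrivial combination `c₁ Tr(d) + c₂ Tr(a d) = Tr((c₁ + c₂ a) d)` would vanish identically, which by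
nondegeneracy of the trace form forces `c₁ + c₂ a = 0`, impossible for `a ∉ 𝔽_p`. Hence its kernel
has `p^(m-2)` elements; it lies inside the trace-zero hyperplane, which has `p^(m-1)` elements, and
the weight of `c(a)` counts the difference (`d = 0` is in the kernel).
-/

open Finset

theorem LinearMap.card_filter_eq_zero_mul_card {R M M₂ : Type*} [Ring R] [AddCommGroup M]
    [Module R M] [AddCommGroup M₂] [Module R M₂] [Fintype M] [DecidableEq M₂]
    {f : M →ₗ[R] M₂} (hf : Function.Surjective f) :
    #{x | f x = 0} * Nat.card M₂ = Fintype.card M := by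
  have hker : Nat.card (LinearMap.ker f) = #{x | f x = 0} := by
    rw [← Fintype.card_subtype, ← Nat.card_eq_fintype_card]
    rfl
  rw [← hker, ← Nat.card_eq_fintype_card, (LinearMap.ker f).card_eq_card_quotient_mul_card,
    Nat.card_congr (f.quotKerEquivOfSurjective hf).toEquiv]

theorem LinearMap.prod_surjective_of_linearIndependent {K V : Type*} [Field K] [AddCommGroup V]
    [Module K V] {f g : Module.Dual K V} (hfg : LinearIndependent K ![f, g]) :
    Function.Surjective (f.prod g) := by
  rw [← LinearMap.dualMap_injective_iff, injective_iff_map_eq_zero]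
  intro φ hφ
  set c₁ := φ (1, 0)
  set c₂ := φ (0, 1)
  have hφ_apply (x y : K) : φ (x, y) = x * c₁ + y * c₂ := by
    rw [← smul_eq_mul, ← smul_eq_mul, ← map_smul, ← map_smul, ← map_add]
    simp
  have hcomb : c₁ • f + c₂ • g = 0 := by
    ext v
    simpa [hφ_apply, mul_comm] using LinearMap.congr_fun hφ v
  obtain ⟨hc₁, hc₂⟩ := LinearIndependent.pair_iff.mp hfg _ _ hcomb
  refine LinearMap.ext fun ⟨x, y⟩ => ?_
  simp [hφ_apply, hc₁, hc₂]

theorem linearIndependent_pair_one_iff {K L : Type*} [Field K] [Field L] [Algebra K L] {a : L} :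
    LinearIndependent K ![1, a] ↔ a ∉ Set.range (algebraMap K L) := by
  simp [LinearIndependent.pair_iff' one_ne_zero, Algebra.smul_def]

theorem Algebra.traceForm_one_prod_surjective {K L : Type*} [Field K] [Field L] [Algebra K L]
    [FiniteDimensional K L] [Algebra.IsSeparable K L] {a : L}
    (ha : a ∉ Set.range (algebraMap K L)) :
    Function.Surjective ((traceForm K L 1).prod (traceForm K L a)) := by
  apply LinearMap.prod_surjective_of_linearIndependent
  have hker : LinearMap.ker (traceForm K L) = ⊥ := (traceForm_nondegenerate K L).ker_eq_bot
  have h := (linearIndependent_pair_one_iff.mpr ha).map' _ hker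
  rwa [← FinVec.map_eq] at h

theorem weight_CD0_nonprime_general
    (p : ℕ) [Fact p.Prime] (m : ℕ) (hm : 2 ≤ m)
    (F : Type*) [Field F] [Fintype F] [DecidableEq F] [Algebra (ZMod p) F]
    (hcard : Fintype.card F = p ^ m)
    (a : F) (ha : a ∉ Set.range (algebraMap (ZMod p) F)) :
    (Finset.univ.filter fun d : F =>
        (d ≠ 0 ∧ Algebra.trace (ZMod p) F d = 0) ∧
          Algebra.trace (ZMod p) F (a * d) ≠ 0).card = p ^ (m - 2) * (p - 1) := by
  set T := Algebra.traceForm (ZMod p) F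
  have hsurj : Function.Surjective ((T 1).prod (T a)) := Algebra.traceForm_one_prod_surjective ha
  have hcount₁ := LinearMap.card_filter_eq_zero_mul_card (Prod.fst_surjective.comp hsurj)
  have hcount₂ := LinearMap.card_filter_eq_zero_mul_card hsurj
  have hsplit : (univ.filter fun d : F => (d ≠ 0 ∧ Algebra.trace (ZMod p) F d = 0) ∧
      Algebra.trace (ZMod p) F (a * d) ≠ 0) =
      (univ.filter fun d => T 1 d = 0) \ univ.filter fun d => (T 1).prod (T a) d = 0 := by
    ext d
    obtain rfl | hd := eq_or_ne d 0
    · simp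
    · simp only [mem_filter, mem_sdiff, mem_univ, true_and, ne_eq, hd, not_false_eq_true,
        T, Algebra.traceForm_apply, one_mul, LinearMap.prod_apply, Function.prod_apply,
        Prod.mk_eq_zero]
      tauto
  obtain ⟨k, rfl⟩ : ∃ k, m = k + 2 := ⟨m - 2, by omega⟩
  have hp : 0 < p := (Fact.out : p.Prime).pos
  simp only [Nat.card_prod, Nat.card_zmod, hcard] at hcount₁ hcount₂
  have h₁ : #{d | T 1 d = 0} = p ^ k * p :=
    Nat.eq_of_mul_eq_mul_right hp (by rw [hcount₁]; ring)
  have h₂ : #{d | (T 1).prod (T a) d = 0} = p ^ k :=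
    Nat.eq_of_mul_eq_mul_right (Nat.mul_pos hp hp) (by rw [hcount₂]; ring)
  have hsub : (univ.filter fun d => (T 1).prod (T a) d = 0) ⊆ univ.filter fun d => T 1 d = 0 :=
    monotone_filter_right _ fun _ _ hd => (Prod.ext_iff.mp hd).1
  rw [hsplit, card_sdiff_of_subset hsub, h₁, h₂, Nat.add_sub_cancel, Nat.mul_sub_one]

/-- Let `p` be an odd prime and `m ≥ 2`. For every `a ∈ F_{p^m}` not in the prime subfield,
the codeword `c(a)` of `C_{D(0)}` has Hamming weight `p^(m-2)·(p-1)`. -/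
theorem weight_CD0_nonprime
    (p : ℕ) [Fact p.Prime] (hp2 : p ≠ 2) (m : ℕ) (hm : 2 ≤ m)
    (F : Type*) [Field F] [Fintype F] [DecidableEq F] [Algebra (ZMod p) F]
    (hcard : Fintype.card F = p ^ m)
    (a : F) (ha : a ∉ Set.range (algebraMap (ZMod p) F)) :
    (Finset.univ.filter fun d : F =>
        (d ≠ 0 ∧ Algebra.trace (ZMod p) F d = 0) ∧
          Algebra.trace (ZMod p) F (a * d) ≠ 0).card = p ^ (m - 2) * (p - 1) :=
  weight_CD0_nonprime_general p m hm F hcard a ha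
end

section
/- Let p be an odd prime and m ≥ 2. The linear code C_{D(0)} = {c(a) : a ∈ F_{p^m}}, viewed as a set of functions from D(0) to F_p, has exactly p^{m-1} elements; equivalently, for a ∈ F_{p^m}, the codeword c(a) is the zero word if and only if a lies in the prime subfield F_p. -/
/-!
A codeword `d ↦ Tr(a d)` vanishes on the trace-zero hyperplane exactly when the functional
`Tr(a ·)` is a scalar multiple `c • Tr` of the trace; by nondegeneracy of the trace form this means
`a = c ∈ 𝔽_p`. So `a ↦ c(a)` is `𝔽_p`-linear with one-dimensional kernel, and its image has
dimension `m - 1`.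
-/

open LinearMap

section TraceCode

variable (K L : Type*) [Field K] [Field L] [Algebra K L]

/-- The map `a ↦ c(a)` onto the code `C_{D(0)}`. -/
noncomputable def traceCode : L →ₗ[K] ({d : L // d ≠ 0 ∧ Algebra.trace K L d = 0} → K) where
  toFun a d := Algebra.trace K L (a * d)
  map_add' a b := by ext d; simp [add_mul]
  map_smul' c a := by ext d; simp

variable {K L}

theorem traceCode_apply (a : L) (d : {d : L // d ≠ 0 ∧ Algebra.trace K L d = 0}) :
    traceCode K L a d = Algebra.trace K L (a * d) :=
  rfl

theorem exists_trace_mul_eq_mul_trace [FiniteDimensional K L] {a : L}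
    (h : ∀ d, Algebra.trace K L d = 0 → Algebra.trace K L (a * d) = 0) :
    ∃ c : K, ∀ d, Algebra.trace K L (a * d) = c * Algebra.trace K L d := by
  have hker :
      ⨅ _ : Unit, ker (Algebra.trace K L) ≤ ker ((Algebra.trace K L).comp (mulLeft K a)) := by
    intro d hd
    simpa using h d (by simpa using hd)
  obtain ⟨c, hc⟩ := Submodule.mem_span_singleton.mp <| by
    simpa using mem_span_of_iInf_ker_le_ker hker
  exact ⟨c, fun d => by simpa using (LinearMap.congr_fun hc d).symm⟩

theorem mem_range_algebraMap_of_trace_mul_eq_zero [FiniteDimensional K L]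
    [Algebra.IsSeparable K L] {a : L}
    (h : ∀ d, Algebra.trace K L d = 0 → Algebra.trace K L (a * d) = 0) :
    a ∈ Set.range (algebraMap K L) := by
  obtain ⟨c, hc⟩ := exists_trace_mul_eq_mul_trace h
  refine ⟨c, sub_eq_zero.mp <| (traceForm_nondegenerate K L).1 _ fun y => ?_⟩
  rw [Algebra.traceForm_apply, sub_mul, map_sub, hc, ← Algebra.smul_def, map_smul, smul_eq_mul,
    sub_self]

theorem traceCode_eq_zero_iff [FiniteDimensional K L] [Algebra.IsSeparable K L] (a : L) :
    traceCode K L a = 0 ↔ a ∈ Set.range (algebraMap K L) := by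
  constructor
  · intro h
    refine mem_range_algebraMap_of_trace_mul_eq_zero fun d hd => ?_
    rcases eq_or_ne d 0 with rfl | hd0
    · simp
    · exact congr_fun h ⟨d, hd0, hd⟩
  · rintro ⟨c, rfl⟩
    ext d
    rw [traceCode_apply, ← Algebra.smul_def, map_smul, d.2.2, smul_zero, Pi.zero_apply]

theorem ker_traceCode [FiniteDimensional K L] [Algebra.IsSeparable K L] :
    ker (traceCode K L) = range (Algebra.linearMap K L) := by
  ext a
  simpa using traceCode_eq_zero_iff a

theorem finrank_range_traceCode [FiniteDimensional K L] [Algebra.IsSeparable K L] :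
    Module.finrank K (range (traceCode K L)) = Module.finrank K L - 1 := by
  have hker : Module.finrank K (ker (traceCode K L)) = 1 := by
    rw [ker_traceCode, LinearMap.finrank_range_of_inj (algebraMap K L).injective,
      Module.finrank_self]
  have := finrank_range_add_finrank_ker (traceCode K L)
  omega

theorem natCard_range_traceCode [FiniteDimensional K L] [Algebra.IsSeparable K L] :
    Nat.card (range (traceCode K L)) = Nat.card K ^ (Module.finrank K L - 1) := by
  rw [Module.natCard_eq_pow_finrank (K := K), finrank_range_traceCode]

end TraceCode

theorem card_code_CD0_general
    (p : ℕ) [Fact p.Prime] (m : ℕ)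
    (F : Type*) [Field F] [Fintype F] [Algebra (ZMod p) F]
    (hcard : Fintype.card F = p ^ m) :
    (Set.range (fun a : F =>
        fun d : {d : F // d ≠ 0 ∧ Algebra.trace (ZMod p) F d = 0} =>
          Algebra.trace (ZMod p) F (a * d.1))).ncard = p ^ (m - 1) ∧
    (∀ a : F,
      (fun d : {d : F // d ≠ 0 ∧ Algebra.trace (ZMod p) F d = 0} =>
          Algebra.trace (ZMod p) F (a * d.1)) = 0 ↔
        a ∈ Set.range (algebraMap (ZMod p) F)) := by
  have hfinrank : Module.finrank (ZMod p) F = m := by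
    refine Nat.pow_right_injective (Fact.out : p.Prime).two_le ?_
    change p ^ _ = p ^ m
    rw [← hcard, ← Nat.card_eq_fintype_card, Module.natCard_eq_pow_finrank (K := ZMod p),
      Nat.card_zmod]
  refine ⟨?_, traceCode_eq_zero_iff⟩
  rw [← Nat.card_coe_set_eq]
  change Nat.card (range (traceCode (ZMod p) F)) = _
  rw [natCard_range_traceCode, Nat.card_zmod, hfinrank]

/-- Let `p` be an odd prime and `m ≥ 2`. The linear code `C_{D(0)}`, viewed as a set of
functions from `D(0)` to `F_p`, has exactly `p^(m-1)` elements; equivalently, for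
`a ∈ F_{p^m}`, the codeword `c(a)` is the zero word iff `a` lies in the prime subfield. -/
theorem card_code_CD0
    (p : ℕ) [Fact p.Prime] (hp2 : p ≠ 2) (m : ℕ) (hm : 2 ≤ m)
    (F : Type*) [Field F] [Fintype F] [DecidableEq F] [Algebra (ZMod p) F]
    (hcard : Fintype.card F = p ^ m) :
    (Set.range (fun a : F =>
        fun d : {d : F // d ≠ 0 ∧ Algebra.trace (ZMod p) F d = 0} =>
          Algebra.trace (ZMod p) F (a * d.1))).ncard = p ^ (m - 1) ∧
    (∀ a : F,
      (fun d : {d : F // d ≠ 0 ∧ Algebra.trace (ZMod p) F d = 0} =>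
          Algebra.trace (ZMod p) F (a * d.1)) = 0 ↔
        a ∈ Set.range (algebraMap (ZMod p) F)) :=
  card_code_CD0_general p m F hcard
end

section
/- Let p be an odd prime, m ≥ 2, and α ∈ F_p with α ≠ 0. For every a ∈ F_{p^m} that does not lie in the prime subfield F_p, the number of d ∈ D(α) with Tr(a·d) ≠ 0 equals p^{m-2}(p-1); i.e., the codeword c(a) of C_{D(α)} has Hamming weight p^{m-2}(p-1). -/
/-!
The linear map `d ↦ (Tr d, Tr (a d))` from `F_{p^m}` onto `F_p²` is surjective: otherwise
`Tr (a ·)` vanishes on `ker Tr`, hence is a multiple `c • Tr`, and nondegeneracy of the trace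
form forces `a = c ∈ F_p`. So its fibres have `p^(m-2)` elements while those of `Tr` have
`p^(m-1)`, and the weight is the difference `p^(m-1) - p^(m-2)`; the condition `d ≠ 0` is
automatic because `Tr 0 = 0 ≠ α`.
-/

open Finset

theorem AddMonoidHom.card_fiber_mul_card_of_surjective {G V F : Type*} [AddGroup G] [Fintype G]
    [AddMonoid V] [Fintype V] [DecidableEq V] [FunLike F G V] [AddMonoidHomClass F G V]
    (f : F) (hf : Function.Surjective f) (v : V) :
    #{g | f g = v} * Fintype.card V = Fintype.card G := by
  calc #{g | f g = v} * Fintype.card V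
      = ∑ w : V, #{g | f g = w} := by
        rw [sum_congr rfl fun w _ ↦ card_fiber_eq_of_mem_range f (hf w) (hf v), sum_const,
          card_univ, smul_eq_mul, mul_comm]
    _ = Fintype.card G := (card_eq_sum_card_fiberwise fun g _ ↦ mem_univ (f g)).symm

namespace LinearMap

variable {K M : Type*} [Field K] [AddCommGroup M] [Module K M]

theorem prod_surjective_of_forall_ne_smul {f g : M →ₗ[K] K} (hf : f ≠ 0)
    (hg : ∀ c : K, g ≠ c • f) : Function.Surjective (f.prod g) := by
  obtain ⟨w, hfw, hgw⟩ : ∃ w, f w = 0 ∧ g w ≠ 0 := by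
    by_contra! h
    have hker : ⨅ _ : Unit, ker f ≤ ker g := by
      rw [iInf_const]
      exact fun w hw ↦ h w hw
    obtain ⟨c, hc⟩ := Submodule.mem_span_singleton.1
      (by simpa using mem_span_of_iInf_ker_le_ker hker)
    exact hg c hc.symm
  obtain ⟨u, hfu⟩ : ∃ u, f u = 1 := by
    obtain ⟨x, hx⟩ := not_forall.1 fun h ↦ hf (ext h)
    exact ⟨(f x)⁻¹ • x, by simp [inv_mul_cancel₀ hx]⟩
  rintro ⟨x, y⟩
  refine ⟨x • u + ((y - x * g u) / g w) • w, ?_⟩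
  ext
  · simp [hfu, hfw]
  · change g (x • u + _ • w) = y
    rw [map_add, map_smul, map_smul, smul_eq_mul, smul_eq_mul]
    field_simp
    ring

end LinearMap

namespace Algebra

variable {K L : Type*} [Field K] [Field L] [Algebra K L]

theorem trace_comp_mulLeft_ne_smul_trace [FiniteDimensional K L] [Algebra.IsSeparable K L]
    {a : L} (ha : a ∉ Set.range (algebraMap K L)) (c : K) :
    (trace K L).comp (LinearMap.mulLeft K a) ≠ c • trace K L := by
  intro h
  refine ha ⟨c, (sub_eq_zero.1 <| (traceForm_nondegenerate K L).1 _ fun d ↦ ?_).symm⟩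
  have hd := LinearMap.congr_fun h d
  simp only [LinearMap.comp_apply, LinearMap.mulLeft_apply, LinearMap.smul_apply,
    smul_eq_mul] at hd
  rw [traceForm_apply, sub_mul, map_sub, hd, ← smul_eq_mul, ← map_smul, Algebra.smul_def,
    sub_self]

theorem prod_trace_trace_mul_surjective [FiniteDimensional K L] [Algebra.IsSeparable K L]
    {a : L} (ha : a ∉ Set.range (algebraMap K L)) :
    Function.Surjective ((trace K L).prod ((trace K L).comp (LinearMap.mulLeft K a))) :=
  LinearMap.prod_surjective_of_forall_ne_smul
    (fun h ↦ by simpa [h] using trace_surjective K L 1) (trace_comp_mulLeft_ne_smul_trace ha)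

theorem card_trace_eq_and_trace_mul_ne_zero_mul_card_sq [Fintype K] [Fintype L] [DecidableEq K]
    {a : L} (ha : a ∉ Set.range (algebraMap K L)) (α : K) :
    #{d : L | trace K L d = α ∧ trace K L (a * d) ≠ 0} * Fintype.card K ^ 2
      = Fintype.card L * (Fintype.card K - 1) := by
  have hT := AddMonoidHom.card_fiber_mul_card_of_surjective _ (trace_surjective K L) α
  have hTa := AddMonoidHom.card_fiber_mul_card_of_surjective _
    (prod_trace_trace_mul_surjective ha) (α, 0)
  have hsplit := card_filter_add_card_filter_not (s := {d : L | trace K L d = α})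
    fun d ↦ trace K L (a * d) = 0
  simp only [filter_filter, LinearMap.prod_apply, Function.prod, LinearMap.comp_apply,
    LinearMap.mulLeft_apply, Prod.mk.injEq, Fintype.card_prod] at hsplit hTa
  have hq : 1 ≤ Fintype.card K := Fintype.card_pos
  zify [hq] at hsplit hT hTa ⊢
  linear_combination (Fintype.card K : ℤ) ^ 2 * hsplit + (Fintype.card K : ℤ) * hT - hTa

end Algebra

theorem weight_CDalpha_nonprime_general
    (p : ℕ) [Fact p.Prime] (m : ℕ) (hm : 2 ≤ m)
    (F : Type*) [Field F] [Fintype F] [DecidableEq F] [Algebra (ZMod p) F]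
    (hcard : Fintype.card F = p ^ m) (α : ZMod p) (hα : α ≠ 0)
    (a : F) (ha : a ∉ Set.range (algebraMap (ZMod p) F)) :
    (Finset.univ.filter fun d : F =>
        (d ≠ 0 ∧ Algebra.trace (ZMod p) F d = α) ∧
          Algebra.trace (ZMod p) F (a * d) ≠ 0).card = p ^ (m - 2) * (p - 1) := by
  have hweight := Algebra.card_trace_eq_and_trace_mul_ne_zero_mul_card_sq ha α
  rw [ZMod.card, hcard, ← Nat.sub_add_cancel hm, pow_add, mul_right_comm] at hweight
  convert Nat.eq_of_mul_eq_mul_right (pow_pos (Fact.out : p.Prime).pos 2) hweight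
    using 3 with d
  refine ⟨fun ⟨⟨_, hd⟩, had⟩ ↦ ⟨hd, had⟩, fun ⟨hd, had⟩ ↦ ⟨⟨?_, hd⟩, had⟩⟩
  rintro rfl
  exact hα (hd ▸ map_zero _)

/-- Let `p` be an odd prime, `m ≥ 2`, and `α ∈ F_p` nonzero. For every `a ∈ F_{p^m}` not in
the prime subfield, the codeword `c(a)` of `C_{D(α)}` has Hamming weight `p^(m-2)·(p-1)`. -/
theorem weight_CDalpha_nonprime
    (p : ℕ) [Fact p.Prime] (hp2 : p ≠ 2) (m : ℕ) (hm : 2 ≤ m)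
    (F : Type*) [Field F] [Fintype F] [DecidableEq F] [Algebra (ZMod p) F]
    (hcard : Fintype.card F = p ^ m) (α : ZMod p) (hα : α ≠ 0)
    (a : F) (ha : a ∉ Set.range (algebraMap (ZMod p) F)) :
    (Finset.univ.filter fun d : F =>
        (d ≠ 0 ∧ Algebra.trace (ZMod p) F d = α) ∧
          Algebra.trace (ZMod p) F (a * d) ≠ 0).card = p ^ (m - 2) * (p - 1) :=
  weight_CDalpha_nonprime_general p m hm F hcard α hα a ha
end

section
/- Let p be an odd prime, m a positive integer, and α ∈ F_p with α ≠ 0. The map a ↦ c(a) from F_{p^m} to functions D(α) → F_p is injective; consequently the linear code C_{D(α)} = {c(a) : a ∈ F_{p^m}} has exactly p^m codewords (dimension m over F_p). -/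
/-!
Write `Tr` for the trace of a finite separable extension `L/K` and fix `α ≠ 0` in `K`.
The affine hyperplane `Tr⁻¹(α)` spans `L`: an element of nonzero trace is a scalar multiple
of a point of it, and an element `y` of trace zero is the difference `(y + d₀) - d₀` of two
of its points. Hence an element `c` with `Tr (c * d) = 0` on the hyperplane is orthogonal to
all of `L` for the trace form, so `c = 0` by nondegeneracy. Applied to `c = a - b`, this makes
`a ↦ (Tr (a * d))_{d ∈ D(α)}` injective, and the code has as many words as `F` has elements.
-/

section TraceHyperplane

variable {K L : Type*} [Field K] [Field L] [Algebra K L]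
  [FiniteDimensional K L] [Algebra.IsSeparable K L]

open Algebra

theorem trace_mul_eq_zero_of_forall_trace_eq {α : K} (hα : α ≠ 0) {c : L}
    (hc : ∀ d : L, trace K L d = α → trace K L (c * d) = 0) (y : L) :
    trace K L (c * y) = 0 := by
  obtain ⟨d₀, hd₀⟩ := trace_surjective K L α
  by_cases hy : trace K L y = 0
  · have h := hc (y + d₀) (by rw [map_add, hy, hd₀, zero_add])
    rwa [mul_add, map_add, hc d₀ hd₀, add_zero] at h
  · have hs : α / trace K L y ≠ 0 := div_ne_zero hα hy
    have h := hc ((α / trace K L y) • y) (by rw [map_smul, smul_eq_mul, div_mul_cancel₀ _ hy])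
    rw [mul_smul_comm, map_smul, smul_eq_mul] at h
    exact (mul_eq_zero.mp h).resolve_left hs

theorem eq_zero_of_forall_trace_eq_trace_mul_eq_zero {α : K} (hα : α ≠ 0) {c : L}
    (hc : ∀ d : L, trace K L d = α → trace K L (c * d) = 0) : c = 0 :=
  (traceForm_nondegenerate K L).1 c fun y => by
    simpa only [traceForm_apply] using trace_mul_eq_zero_of_forall_trace_eq hα hc y

theorem injective_trace_mul_on_trace_eq {α : K} (hα : α ≠ 0) :
    Function.Injective (fun a : L =>
      fun d : {d : L // d ≠ 0 ∧ trace K L d = α} => trace K L (a * d.1)) := by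
  intro a b hab
  refine sub_eq_zero.mp (eq_zero_of_forall_trace_eq_trace_mul_eq_zero hα fun d hd => ?_)
  have hd₀ : d ≠ 0 := by
    rintro rfl
    exact hα (by rw [← hd, map_zero])
  rw [sub_mul, map_sub, sub_eq_zero]
  exact congrFun hab ⟨d, hd₀, hd⟩

end TraceHyperplane

theorem code_CDalpha_injective_general
    (p : ℕ) [Fact p.Prime] (m : ℕ)
    (F : Type*) [Field F] [Fintype F] [Algebra (ZMod p) F]
    (hcard : Fintype.card F = p ^ m) (α : ZMod p) (hα : α ≠ 0) :
    Function.Injective (fun a : F =>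
      fun d : {d : F // d ≠ 0 ∧ Algebra.trace (ZMod p) F d = α} =>
        Algebra.trace (ZMod p) F (a * d.1)) ∧
    (Set.range (fun a : F =>
      fun d : {d : F // d ≠ 0 ∧ Algebra.trace (ZMod p) F d = α} =>
        Algebra.trace (ZMod p) F (a * d.1))).ncard = p ^ m := by
  have hinj := injective_trace_mul_on_trace_eq (L := F) hα
  refine ⟨hinj, ?_⟩
  rw [Set.ncard_range_of_injective hinj, Nat.card_eq_fintype_card, hcard]

/-- Let `p` be an odd prime, `m` a positive integer, and `α ∈ F_p` nonzero. The map
`a ↦ c(a)` from `F_{p^m}` to functions `D(α) → F_p` is injective; consequently the linear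
code `C_{D(α)}` has exactly `p^m` codewords. -/
theorem code_CDalpha_injective
    (p : ℕ) [Fact p.Prime] (hp2 : p ≠ 2) (m : ℕ) (hm0 : 0 < m)
    (F : Type*) [Field F] [Fintype F] [DecidableEq F] [Algebra (ZMod p) F]
    (hcard : Fintype.card F = p ^ m) (α : ZMod p) (hα : α ≠ 0) :
    Function.Injective (fun a : F =>
      fun d : {d : F // d ≠ 0 ∧ Algebra.trace (ZMod p) F d = α} =>
        Algebra.trace (ZMod p) F (a * d.1)) ∧
    (Set.range (fun a : F =>
      fun d : {d : F // d ≠ 0 ∧ Algebra.trace (ZMod p) F d = α} =>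
        Algebra.trace (ZMod p) F (a * d.1))).ncard = p ^ m :=
  code_CDalpha_injective_general p m F hcard α hα
end

section
/- Let p be an odd prime and m ≥ 2. For every a ∈ F_{p^m} not lying in the prime subfield F_p, the codeword c(a) of C_{D(0)} has constant composition: for every β ∈ F_p with β ≠ 0, the number of d ∈ D(0) with Tr(a·d) = β equals p^{m-2}, and the number of d ∈ D(0) with Tr(a·d) = 0 equals p^{m-2} - 1. -/
/-!
The map `d ↦ (Tr d, Tr (a d))` is `F_p`-linear from `F_{p^m}` onto `F_p²`: dually, a relation
`c₁ Tr + c₂ Tr(a ·) = Tr((c₁ + c₂ a) ·) = 0` forces `c₁ + c₂ a = 0` by nondegeneracy of the trace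
form, hence `c₁ = c₂ = 0` because `a ∉ F_p`. All fibres of a surjective linear map are cosets of its
kernel, of size `p^(m-2)`. The count for `β ≠ 0` is the fibre over `(0, β)`, and the count for `0`
is the fibre over `(0, 0)` without `d = 0`.
-/

open Finset

section TraceMulPair

variable {K L : Type*} [Field K] [Field L] [Algebra K L]

theorem eq_zero_of_smul_one_add_smul_eq_zero {a : L} (ha : a ∉ Set.range (algebraMap K L))
    {s t : K} (h : s • (1 : L) + t • a = 0) : s = 0 ∧ t = 0 := by
  obtain rfl | ht := eq_or_ne t 0
  · simpa using h
  · refine absurd ⟨-s / t, ?_⟩ ha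
    rw [map_div₀, map_neg, div_eq_iff (by simpa using ht), neg_eq_iff_add_eq_zero, ← h,
      Algebra.smul_def, Algebra.smul_def, mul_one, mul_comm]

variable (K) in
noncomputable def traceMulPair (a : L) : L →ₗ[K] K × K :=
  (Algebra.trace K L).prod (Algebra.trace K L ∘ₗ LinearMap.mulLeft K a)

@[simp]
theorem traceMulPair_apply (a d : L) :
    traceMulPair K a d = (Algebra.trace K L d, Algebra.trace K L (a * d)) :=
  rfl

theorem traceMulPair_surjective [FiniteDimensional K L] [Algebra.IsSeparable K L] {a : L}
    (ha : a ∉ Set.range (algebraMap K L)) : Function.Surjective (traceMulPair K a) := by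
  rw [← LinearMap.dualMap_injective_iff, injective_iff_map_eq_zero]
  intro φ hφ
  set c₁ := φ (1, 0)
  set c₂ := φ (0, 1)
  have hφ_apply (u v : K) : φ (u, v) = u * c₁ + v * c₂ := by
    rw [show ((u, v) : K × K) = u • (1, 0) + v • (0, 1) by simp, map_add, map_smul, map_smul,
      smul_eq_mul, smul_eq_mul]
  have htrace (d : L) : Algebra.trace K L ((c₁ • 1 + c₂ • a) * d) = 0 := by
    have := LinearMap.congr_fun hφ d
    rw [LinearMap.dualMap_apply, traceMulPair_apply, hφ_apply] at this
    rw [add_mul, smul_mul_assoc, smul_mul_assoc, one_mul, map_add, map_smul, map_smul,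
      smul_eq_mul, smul_eq_mul, mul_comm c₁, mul_comm c₂]
    exact this
  obtain ⟨hc₁, hc₂⟩ := eq_zero_of_smul_one_add_smul_eq_zero ha
    ((traceForm_nondegenerate K L).1 _ htrace)
  refine LinearMap.ext fun ⟨u, v⟩ ↦ ?_
  simp [hφ_apply, hc₁, hc₂]

end TraceMulPair

theorem card_filter_apply_eq_of_surjective {K V W : Type*} [Field K] [Fintype K]
    [AddCommGroup V] [Module K V] [Fintype V] [AddCommGroup W] [Module K W] [DecidableEq W]
    {f : V →ₗ[K] W} (hf : Function.Surjective f) (w : W) :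
    #{v | f v = w} = Fintype.card K ^ (Module.finrank K V - Module.finrank K W) := by
  classical
  have hfinrank_ker : Module.finrank K (LinearMap.ker f) =
      Module.finrank K V - Module.finrank K W := by
    have := LinearMap.finrank_range_add_finrank_ker f
    rw [LinearMap.range_eq_top.mpr hf, finrank_top] at this
    omega
  rw [AddMonoidHom.card_fiber_eq_of_mem_range f (hf w) (hf 0), ← hfinrank_ker,
    ← Module.card_eq_pow_finrank, Fintype.card_subtype]
  simp [LinearMap.mem_ker]

theorem composition_CD0_general
    (p : ℕ) [Fact p.Prime] (m : ℕ)
    (F : Type*) [Field F] [Fintype F] [DecidableEq F] [Algebra (ZMod p) F]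
    (hcard : Fintype.card F = p ^ m)
    (a : F) (ha : a ∉ Set.range (algebraMap (ZMod p) F)) :
    (∀ β : ZMod p, β ≠ 0 →
      (Finset.univ.filter fun d : F =>
          (d ≠ 0 ∧ Algebra.trace (ZMod p) F d = 0) ∧
            Algebra.trace (ZMod p) F (a * d) = β).card = p ^ (m - 2)) ∧
    (Finset.univ.filter fun d : F =>
        (d ≠ 0 ∧ Algebra.trace (ZMod p) F d = 0) ∧
          Algebra.trace (ZMod p) F (a * d) = 0).card = p ^ (m - 2) - 1 := by
  have hfinrank : Module.finrank (ZMod p) F = m := by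
    rw [Module.card_eq_pow_finrank (K := ZMod p), ZMod.card] at hcard
    exact Nat.pow_right_injective (Fact.out : p.Prime).two_le hcard
  have hfiber (v : ZMod p × ZMod p) : #{d | traceMulPair (ZMod p) a d = v} = p ^ (m - 2) := by
    rw [card_filter_apply_eq_of_surjective (traceMulPair_surjective ha), ZMod.card, hfinrank,
      Module.finrank_prod, Module.finrank_self]
  constructor
  · intro β hβ
    rw [← hfiber (0, β)]
    congr 1
    ext d
    simp only [mem_filter, mem_univ, true_and, traceMulPair_apply, Prod.ext_iff]
    refine ⟨fun ⟨⟨_, h₁⟩, h₂⟩ ↦ ⟨h₁, h₂⟩, fun ⟨h₁, h₂⟩ ↦ ⟨⟨?_, h₁⟩, h₂⟩⟩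
    rintro rfl
    simp [eq_comm, hβ] at h₂
  · rw [← hfiber 0, ← card_erase_of_mem (s := {d | traceMulPair (ZMod p) a d = 0}) (a := 0)
      (by simp)]
    congr 1
    ext d
    simp only [mem_erase, mem_filter, mem_univ, true_and, traceMulPair_apply, Prod.ext_iff]
    tauto

/-- Let `p` be an odd prime and `m ≥ 2`. For every `a ∈ F_{p^m}` not in the prime subfield,
the codeword `c(a)` of `C_{D(0)}` has constant composition: every nonzero `β ∈ F_p` occurs
exactly `p^(m-2)` times and `0` occurs exactly `p^(m-2) - 1` times. -/
theorem composition_CD0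
    (p : ℕ) [Fact p.Prime] (hp2 : p ≠ 2) (m : ℕ) (hm : 2 ≤ m)
    (F : Type*) [Field F] [Fintype F] [DecidableEq F] [Algebra (ZMod p) F]
    (hcard : Fintype.card F = p ^ m)
    (a : F) (ha : a ∉ Set.range (algebraMap (ZMod p) F)) :
    (∀ β : ZMod p, β ≠ 0 →
      (Finset.univ.filter fun d : F =>
          (d ≠ 0 ∧ Algebra.trace (ZMod p) F d = 0) ∧
            Algebra.trace (ZMod p) F (a * d) = β).card = p ^ (m - 2)) ∧
    (Finset.univ.filter fun d : F =>
        (d ≠ 0 ∧ Algebra.trace (ZMod p) F d = 0) ∧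
          Algebra.trace (ZMod p) F (a * d) = 0).card = p ^ (m - 2) - 1 :=
  composition_CD0_general p m F hcard a ha
end

section
/- Let p be an odd prime and m ≥ 2, and let C_0' = {c(a) : a ∈ F_{p^m} \ F_p} be the set of codewords of C_{D(0)} arising from elements outside the prime subfield. Then C_0' has exactly p^{m-1} - 1 elements, and for any a₁, a₂ ∈ F_{p^m} \ F_p with c(a₁) ≠ c(a₂), the Hamming distance between c(a₁) and c(a₂) equals p^{m-2}(p-1); in particular the minimum Hamming distance of C_0' is p^{m-2}(p-1). -/
open Finset

private lemma my_trace_nondegen (p : ℕ) [Fact p.Prime]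
    (F : Type*) [Field F] [Fintype F] [Algebra (ZMod p) F]
    (b : F) (h : ∀ x, Algebra.trace (ZMod p) F (b * x) = 0) : b = 0 := by
  by_contra hb
  apply Algebra.trace_ne_zero (ZMod p) F
  ext y
  have := h (b⁻¹ * y)
  rwa [← mul_assoc, mul_inv_cancel₀ hb, one_mul] at this

private lemma my_mem_range_iff (p : ℕ) [Fact p.Prime]
    (F : Type*) [Field F] [Fintype F] [Algebra (ZMod p) F] (b : F) :
    b ∈ Set.range (algebraMap (ZMod p) F) ↔
      ∀ d : F, Algebra.trace (ZMod p) F d = 0 → Algebra.trace (ZMod p) F (b * d) = 0 := by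
  constructor
  · rintro ⟨lam, rfl⟩ d hd
    rw [← Algebra.smul_def, map_smul, hd, smul_zero]
  · intro h
    obtain ⟨x₀, hx₀⟩ := Algebra.trace_surjective (ZMod p) F 1
    set T := Algebra.trace (ZMod p) F with hT
    refine ⟨T (b * x₀), ?_⟩
    have key : ∀ x, T (b * x) = T x * T (b * x₀) := by
      intro x
      have h1 : T (x - T x • x₀) = 0 := by
        rw [map_sub, map_smul, hx₀, smul_eq_mul, mul_one, sub_self]
      have h2 := h _ h1
      rw [mul_sub, mul_smul_comm, map_sub, map_smul, smul_eq_mul, sub_eq_zero] at h2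
      exact h2
    have hz : b - algebraMap (ZMod p) F (T (b * x₀)) = 0 := by
      apply my_trace_nondegen p F
      intro x
      rw [sub_mul, map_sub, key x, ← Algebra.smul_def, map_smul, smul_eq_mul, mul_comm, sub_self]
    exact (sub_eq_zero.mp hz).symm

private lemma my_card_ker (p : ℕ) [Fact p.Prime] (m k : ℕ)
    (F : Type*) [Field F] [Fintype F] [Algebra (ZMod p) F]
    (W : Type*) [AddCommGroup W] [Module (ZMod p) W] [Module.Finite (ZMod p) W]
    (hfr : Module.finrank (ZMod p) F = m)
    (hW : Module.finrank (ZMod p) W = k)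
    (f : F →ₗ[ZMod p] W) (hf : Function.Surjective f) :
    Nat.card (LinearMap.ker f) = p ^ (m - k) := by
  classical
  have h1 := LinearMap.finrank_range_add_finrank_ker f
  rw [LinearMap.range_eq_top.mpr hf, finrank_top, hfr, hW] at h1
  have h2 : Fintype.card (LinearMap.ker f) =
      Fintype.card (ZMod p) ^ Module.finrank (ZMod p) (LinearMap.ker f) :=
    Module.card_eq_pow_finrank
  rw [ZMod.card] at h2
  rw [Nat.card_eq_fintype_card, h2]
  congr 1
  omega

/-- Let `p` be an odd prime and `m ≥ 2`, and let `C_0'` be the set of codewords of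
`C_{D(0)}` arising from elements outside the prime subfield. Then `C_0'` has exactly
`p^(m-1) - 1` elements, and any two distinct such codewords are at Hamming distance
exactly `p^(m-2)·(p-1)`. -/
theorem ccc_from_CD0
    (p : ℕ) [Fact p.Prime] (hp2 : p ≠ 2) (m : ℕ) (hm : 2 ≤ m)
    (F : Type*) [Field F] [Fintype F] [DecidableEq F] [Algebra (ZMod p) F]
    (hcard : Fintype.card F = p ^ m)
    (c : F → ({d : F // d ≠ 0 ∧ Algebra.trace (ZMod p) F d = 0} → ZMod p))
    (hc : ∀ a d, c a d = Algebra.trace (ZMod p) F (a * d.1)) :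
    (c '' {a : F | a ∉ Set.range (algebraMap (ZMod p) F)}).ncard = p ^ (m - 1) - 1 ∧
    (∀ a₁ a₂ : F, a₁ ∉ Set.range (algebraMap (ZMod p) F) →
      a₂ ∉ Set.range (algebraMap (ZMod p) F) → c a₁ ≠ c a₂ →
        hammingDist (c a₁) (c a₂) = p ^ (m - 2) * (p - 1)) := by
  classical
  have hp : p.Prime := Fact.out
  have hp1 : 1 < p := hp.one_lt
  have hfr : Module.finrank (ZMod p) F = m := by
    have h1 : Fintype.card F = Fintype.card (ZMod p) ^ Module.finrank (ZMod p) F :=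
      Module.card_eq_pow_finrank
    rw [ZMod.card, hcard] at h1
    exact (Nat.pow_right_injective hp.two_le h1.symm)
  constructor
  · -- cardinality part
    set Sf : Finset F := univ.filter (fun a => a ∉ Set.range (algebraMap (ZMod p) F)) with hSf
    have hset : {a : F | a ∉ Set.range (algebraMap (ZMod p) F)} = ↑Sf := by
      ext a; simp [hSf]
    rw [hset, ← Finset.coe_image, Set.ncard_coe_finset]
    have hinj : Function.Injective (algebraMap (ZMod p) F) := (algebraMap (ZMod p) F).injective
    have hSfcard : Sf.card = p ^ m - p := by
      have hsplit := Finset.card_filter_add_card_filter_not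
        (s := (univ : Finset F)) (p := fun a => a ∈ Set.range (algebraMap (ZMod p) F))
      have himg : univ.filter (fun a => a ∈ Set.range (algebraMap (ZMod p) F)) =
          Finset.image (algebraMap (ZMod p) F) univ := by
        ext a; simp [eq_comm]
      rw [himg, Finset.card_image_of_injective _ hinj, Finset.card_univ, Finset.card_univ,
        ZMod.card, hcard] at hsplit
      have heq : Sf.card =
          (univ.filter (fun a => ¬ a ∈ Set.range (algebraMap (ZMod p) F))).card := by
        congr 1
      omega
    have hfiber : ∀ bb ∈ Sf.image c, (Sf.filter (fun a => c a = bb)).card = p := by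
      intro bb hbb
      obtain ⟨a₀, ha₀, rfl⟩ := Finset.mem_image.mp hbb
      have ha₀' : a₀ ∉ Set.range (algebraMap (ZMod p) F) := (Finset.mem_filter.mp ha₀).2
      have hfil : Sf.filter (fun a => c a = c a₀) =
          Finset.image (fun lam : ZMod p => a₀ + algebraMap (ZMod p) F lam) univ := by
        ext a
        simp only [Finset.mem_filter, Finset.mem_image, Finset.mem_univ, true_and, hSf]
        constructor
        · rintro ⟨hanotin, hca⟩
          have hmem : a - a₀ ∈ Set.range (algebraMap (ZMod p) F) := by
            rw [my_mem_range_iff]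
            intro d hd
            by_cases hd0 : d = 0
            · simp [hd0]
            · have hcd := congrFun hca ⟨d, hd0, hd⟩
              rw [hc, hc] at hcd
              rw [sub_mul, map_sub, hcd, sub_self]
          obtain ⟨lam, hlam⟩ := hmem
          exact ⟨lam, by rw [hlam]; ring⟩
        · rintro ⟨lam, rfl⟩
          constructor
          · intro hmem
            apply ha₀'
            obtain ⟨mu, hmu⟩ := hmem
            exact ⟨mu - lam, by rw [map_sub, hmu]; ring⟩
          · funext d
            rw [hc, hc, add_mul, map_add, ← Algebra.smul_def, map_smul, d.2.2, smul_zero,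
              add_zero]
      rw [hfil, Finset.card_image_of_injective _
        (fun x y h => hinj (by exact add_left_cancel h)), Finset.card_univ, ZMod.card]
    have hsum : Sf.card = ∑ bb ∈ Sf.image c, (Sf.filter (fun a => c a = bb)).card :=
      Finset.card_eq_sum_card_fiberwise (fun a ha => Finset.mem_image_of_mem c ha)
    rw [Finset.sum_congr rfl hfiber, Finset.sum_const, smul_eq_mul, hSfcard] at hsum
    have hpow : p ^ (m - 1) * p = p ^ m := by
      rw [← pow_succ]; congr 1; omega
    have hmulsub : (p ^ (m - 1) - 1) * p = p ^ m - p := by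
      rw [Nat.sub_mul, one_mul, hpow]
    apply Nat.eq_of_mul_eq_mul_right hp.pos
    rw [hmulsub, ← hsum]
  · -- distance part
    intro a₁ a₂ h₁ h₂ hne
    set b := a₁ - a₂ with hb
    have hbrange : b ∉ Set.range (algebraMap (ZMod p) F) := by
      intro hbr
      apply hne
      funext d
      rw [hc, hc]
      have hzz := (my_mem_range_iff p F b).mp hbr d.1 d.2.2
      rw [hb, sub_mul, map_sub, sub_eq_zero] at hzz
      exact hzz
    obtain ⟨d₀, hd₀, hbd₀⟩ :
        ∃ d, Algebra.trace (ZMod p) F d = 0 ∧ Algebra.trace (ZMod p) F (b * d) ≠ 0 := by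
      by_contra hcon
      push_neg at hcon
      exact hbrange ((my_mem_range_iff p F b).mpr hcon)
    obtain ⟨x₀, hx₀⟩ := Algebra.trace_surjective (ZMod p) F 1
    set Ψ : F →ₗ[ZMod p] ZMod p × ZMod p :=
      (Algebra.trace (ZMod p) F).prod
        ((Algebra.trace (ZMod p) F) ∘ₗ LinearMap.mulLeft (ZMod p) b) with hΨ
    have hΨapp : ∀ x, Ψ x = (Algebra.trace (ZMod p) F x, Algebra.trace (ZMod p) F (b * x)) :=
      fun x => rfl
    set d₂ := (Algebra.trace (ZMod p) F (b * d₀))⁻¹ • d₀ with hd₂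
    have hd₂a : Algebra.trace (ZMod p) F d₂ = 0 := by rw [hd₂, map_smul, hd₀, smul_zero]
    have hd₂b : Algebra.trace (ZMod p) F (b * d₂) = 1 := by
      rw [hd₂, mul_smul_comm, map_smul, smul_eq_mul, inv_mul_cancel₀ hbd₀]
    set d₁ := x₀ - Algebra.trace (ZMod p) F (b * x₀) • d₂ with hd₁
    have hd₁a : Algebra.trace (ZMod p) F d₁ = 1 := by
      rw [hd₁, map_sub, map_smul, hx₀, hd₂a, smul_zero, sub_zero]
    have hd₁b : Algebra.trace (ZMod p) F (b * d₁) = 0 := by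
      rw [hd₁, mul_sub, mul_smul_comm, map_sub, map_smul, hd₂b, smul_eq_mul, mul_one, sub_self]
    have hsurj : Function.Surjective Ψ := by
      rintro ⟨u, v⟩
      refine ⟨u • d₁ + v • d₂, ?_⟩
      rw [hΨapp]
      have e1 : Algebra.trace (ZMod p) F (u • d₁ + v • d₂) = u := by
        rw [map_add, map_smul, map_smul, hd₁a, hd₂a, smul_eq_mul, mul_one, smul_zero, add_zero]
      have e2 : Algebra.trace (ZMod p) F (b * (u • d₁ + v • d₂)) = v := by
        rw [mul_add, mul_smul_comm, mul_smul_comm, map_add, map_smul, map_smul, hd₁b, hd₂b,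
          smul_zero, smul_eq_mul, mul_one, zero_add]
      rw [e1, e2]
    have hK2 : Nat.card (LinearMap.ker Ψ) = p ^ (m - 2) :=
      my_card_ker p m 2 F (ZMod p × ZMod p) hfr
        (by simp [Module.finrank_prod]) Ψ hsurj
    have hK1 : Nat.card (LinearMap.ker (Algebra.trace (ZMod p) F)) = p ^ (m - 1) :=
      my_card_ker p m 1 F (ZMod p) hfr (Module.finrank_self _) _
        (Algebra.trace_surjective (ZMod p) F)
    have hcond : ∀ (d : F) (hd : d ≠ 0 ∧ Algebra.trace (ZMod p) F d = 0),
        (c a₁ ⟨d, hd⟩ ≠ c a₂ ⟨d, hd⟩ ↔ Algebra.trace (ZMod p) F (b * d) ≠ 0) := by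
      intro d hd
      rw [hc, hc, hb, sub_mul, map_sub]
      constructor
      · intro h hz; exact h (sub_eq_zero.mp hz)
      · intro h hz; exact h (by rw [hz, sub_self])
    have hdist : hammingDist (c a₁) (c a₂) =
        Nat.card {d : F // Algebra.trace (ZMod p) F d = 0 ∧
          Algebra.trace (ZMod p) F (b * d) ≠ 0} := by
      have h0 : hammingDist (c a₁) (c a₂) =
          Fintype.card {d : {d : F // d ≠ 0 ∧ Algebra.trace (ZMod p) F d = 0} //
            c a₁ d ≠ c a₂ d} := by
        rw [hammingDist, Fintype.card_subtype]
      rw [h0, ← Nat.card_eq_fintype_card]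
      refine Nat.card_congr ⟨fun x => ⟨x.1.1, x.1.2.2, (hcond _ x.1.2).mp x.2⟩,
        fun y => ⟨⟨y.1, fun h0 => y.2.2 (by rw [h0, mul_zero, map_zero]), y.2.1⟩,
          (hcond _ _).mpr y.2.2⟩, fun x => rfl, fun y => rfl⟩
    rw [hdist]
    have hsplit : Nat.card {d : F // Algebra.trace (ZMod p) F d = 0 ∧
          Algebra.trace (ZMod p) F (b * d) ≠ 0} +
        Nat.card {d : F // Algebra.trace (ZMod p) F d = 0 ∧
          Algebra.trace (ZMod p) F (b * d) = 0} =
        Nat.card {d : F // Algebra.trace (ZMod p) F d = 0} := by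
      rw [Nat.card_eq_fintype_card, Nat.card_eq_fintype_card, Nat.card_eq_fintype_card,
        Fintype.card_subtype, Fintype.card_subtype, Fintype.card_subtype,
        ← Finset.filter_filter, ← Finset.filter_filter]
      rw [add_comm]
      exact Finset.card_filter_add_card_filter_not
        (s := univ.filter (fun d => Algebra.trace (ZMod p) F d = 0))
        (p := fun d => Algebra.trace (ZMod p) F (b * d) = 0)
    have e1 : Nat.card {d : F // Algebra.trace (ZMod p) F d = 0} = p ^ (m - 1) := by
      rw [← hK1]
      exact Nat.card_congr (Equiv.subtypeEquivRight (by simp [LinearMap.mem_ker]))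
    have e2 : Nat.card {d : F // Algebra.trace (ZMod p) F d = 0 ∧
        Algebra.trace (ZMod p) F (b * d) = 0} = p ^ (m - 2) := by
      rw [← hK2]
      refine Nat.card_congr (Equiv.subtypeEquivRight ?_)
      intro d
      rw [LinearMap.mem_ker, hΨ]
      simp [LinearMap.prod_apply, Prod.ext_iff]
    rw [e1, e2] at hsplit
    have hkey : p ^ (m - 2) * (p - 1) + p ^ (m - 2) = p ^ (m - 1) := by
      have h1 : p ^ (m - 2) * (p - 1) + p ^ (m - 2) = p ^ (m - 2) * ((p - 1) + 1) := by ring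
      rw [h1, Nat.sub_add_cancel hp1.le, ← pow_succ]
      congr 1; omega
    omega
end

section
/- Let p be an odd prime, m ≥ 2, and α ∈ F_p with α ≠ 0. Let C_α' = {c(a) : a ∈ F_{p^m} \ F_p} be the set of codewords of C_{D(α)} arising from elements outside the prime subfield. Then C_α' has exactly p^m - p elements, and the minimum Hamming distance of C_α' equals p^{m-2}(p-1): every two distinct codewords of C_α' are at Hamming distance at least p^{m-2}(p-1), and some pair of distinct codewords attains this distance. -/
open Finset

/-- Fibers of a surjective additive map all have cardinality `card A / card G`. -/
private lemma fiber_card_mul {A G : Type*} [AddCommGroup A] [Fintype A] [DecidableEq A]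
    [AddCommGroup G] [Fintype G] [DecidableEq G]
    (φ : A → G) (hadd : ∀ x y, φ (x + y) = φ x + φ y)
    (hφ : Function.Surjective φ) (y : G) :
    (Finset.univ.filter (fun x => φ x = y)).card * Fintype.card G = Fintype.card A := by
  have hsub : ∀ x z : A, φ (x - z) = φ x - φ z := fun x z =>
    map_sub (AddMonoidHom.mk' φ hadd) x z
  have key : ∀ z : G, (univ.filter (fun x => φ x = z)).card
      = (univ.filter (fun x => φ x = y)).card := by
    intro z
    obtain ⟨t, ht⟩ := hφ (z - y)
    apply Finset.card_bij (fun x _ => x - t)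
    · intro a ha
      simp only [mem_filter, mem_univ, true_and] at ha ⊢
      rw [hsub, ha, ht]; abel
    · intro a _ b _ h
      simpa using sub_left_inj.mp h
    · intro b hb
      simp only [mem_filter, mem_univ, true_and] at hb ⊢
      exact ⟨b + t, by rw [hadd, hb, ht]; abel, by abel⟩
  have total : Fintype.card A = ∑ z ∈ (univ : Finset G),
      (univ.filter (fun x => φ x = z)).card := by
    rw [← Finset.card_univ]
    exact Finset.card_eq_sum_card_fiberwise (fun x _ => Finset.mem_univ (φ x))
  rw [total, Finset.sum_congr rfl (fun z _ => key z), Finset.sum_const, Finset.card_univ,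
    smul_eq_mul, mul_comm]

/-- Let `p` be an odd prime, `m ≥ 2`, and `α ∈ F_p` nonzero. Let `C_α'` be the set of
codewords of `C_{D(α)}` arising from elements outside the prime subfield. Then `C_α'` has
exactly `p^m - p` elements, and its minimum Hamming distance equals `p^(m-2)·(p-1)`:
every two distinct codewords are at distance at least `p^(m-2)·(p-1)`, and some pair of
distinct codewords attains this distance. -/
theorem ccc_from_CDalpha
    (p : ℕ) [Fact p.Prime] (hp2 : p ≠ 2) (m : ℕ) (hm : 2 ≤ m)
    (F : Type*) [Field F] [Fintype F] [DecidableEq F] [Algebra (ZMod p) F]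
    (hcard : Fintype.card F = p ^ m) (α : ZMod p) (hα : α ≠ 0)
    (c : F → ({d : F // d ≠ 0 ∧ Algebra.trace (ZMod p) F d = α} → ZMod p))
    (hc : ∀ a d, c a d = Algebra.trace (ZMod p) F (a * d.1)) :
    (c '' {a : F | a ∉ Set.range (algebraMap (ZMod p) F)}).ncard = p ^ m - p ∧
    (∀ a₁ a₂ : F, a₁ ∉ Set.range (algebraMap (ZMod p) F) →
      a₂ ∉ Set.range (algebraMap (ZMod p) F) → c a₁ ≠ c a₂ →
        p ^ (m - 2) * (p - 1) ≤ hammingDist (c a₁) (c a₂)) ∧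
    (∃ a₁ a₂ : F, a₁ ∉ Set.range (algebraMap (ZMod p) F) ∧
      a₂ ∉ Set.range (algebraMap (ZMod p) F) ∧ c a₁ ≠ c a₂ ∧
        hammingDist (c a₁) (c a₂) = p ^ (m - 2) * (p - 1)) := by
  classical
  have hp : p.Prime := Fact.out
  have hp1 : 1 < p := hp.one_lt
  have hp3 : 3 ≤ p := by
    have := hp.two_le; omega
  haveI : FiniteDimensional (ZMod p) F := Module.Finite.of_finite
  have hTrS : Function.Surjective (Algebra.trace (ZMod p) F) := Algebra.trace_surjective (ZMod p) F
  -- nondegeneracy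
  have nd : ∀ b : F, b ≠ 0 → ∃ d : F, (Algebra.trace (ZMod p) F) (b * d) ≠ 0 := by
    intro b hb
    obtain ⟨e, he⟩ := hTrS 1
    refine ⟨b⁻¹ * e, ?_⟩
    rw [← mul_assoc, mul_inv_cancel₀ hb, one_mul, he]
    exact one_ne_zero
  -- joint surjectivity of ((Algebra.trace (ZMod p) F) ·, (Algebra.trace (ZMod p) F) (b * ·)) when b is outside the prime field
  have hpsi : ∀ b : F, b ∉ Set.range (algebraMap (ZMod p) F) →
      ∀ x y : ZMod p, ∃ d : F, (Algebra.trace (ZMod p) F) d = x ∧ (Algebra.trace (ZMod p) F) (b * d) = y := by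
    intro b hb
    obtain ⟨x₁, hx₁⟩ := hTrS 1
    have hk : ∃ k : F, (Algebra.trace (ZMod p) F) k = 0 ∧ (Algebra.trace (ZMod p) F) (b * k) ≠ 0 := by
      by_contra h
      push_neg at h
      apply hb
      refine ⟨(Algebra.trace (ZMod p) F) (b * x₁), ?_⟩
      have key : ∀ d : F, (Algebra.trace (ZMod p) F) (b * d) = (Algebra.trace (ZMod p) F) d * (Algebra.trace (ZMod p) F) (b * x₁) := by
        intro d
        have h1 : (Algebra.trace (ZMod p) F) (d - (Algebra.trace (ZMod p) F) d • x₁) = 0 := by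
          rw [map_sub, map_smul, hx₁, smul_eq_mul, mul_one, sub_self]
        have h2 := h _ h1
        rwa [mul_sub, mul_smul_comm, map_sub, map_smul, smul_eq_mul, sub_eq_zero] at h2
      by_contra hne
      have hbne : b - algebraMap (ZMod p) F ((Algebra.trace (ZMod p) F) (b * x₁)) ≠ 0 :=
        sub_ne_zero_of_ne (fun hh => hne hh.symm)
      obtain ⟨d, hd⟩ := nd _ hbne
      apply hd
      rw [sub_mul, map_sub, key, ← Algebra.smul_def, map_smul, smul_eq_mul, mul_comm, sub_self]
    obtain ⟨k, hk0, hkb⟩ := hk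
    set v : F := ((Algebra.trace (ZMod p) F) (b * k))⁻¹ • k with hv
    have hv1 : (Algebra.trace (ZMod p) F) v = 0 := by rw [hv, map_smul, hk0, smul_zero]
    have hv2 : (Algebra.trace (ZMod p) F) (b * v) = 1 := by
      rw [hv, mul_smul_comm, map_smul, smul_eq_mul, inv_mul_cancel₀ hkb]
    set u : F := x₁ - (Algebra.trace (ZMod p) F) (b * x₁) • v with hu
    have hu1 : (Algebra.trace (ZMod p) F) u = 1 := by
      rw [hu, map_sub, map_smul, hv1, smul_zero, sub_zero, hx₁]
    have hu2 : (Algebra.trace (ZMod p) F) (b * u) = 0 := by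
      rw [hu, mul_sub, mul_smul_comm, map_sub, map_smul, hv2, smul_eq_mul, mul_one, sub_self]
    intro x y
    refine ⟨x • u + y • v, ?_, ?_⟩
    · rw [map_add, map_smul, map_smul, hu1, hv1, smul_eq_mul, smul_eq_mul, mul_one, mul_zero,
        add_zero]
    · rw [mul_add, mul_smul_comm, mul_smul_comm, map_add, map_smul, map_smul, hu2, hv2,
        smul_eq_mul, smul_eq_mul, mul_zero, mul_one, zero_add]
  -- counting fibers of the trace
  have countTr : ∀ x : ZMod p,
      (univ.filter fun d : F => (Algebra.trace (ZMod p) F) d = x).card = p ^ (m - 1) := by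
    intro x
    have h := fiber_card_mul (fun d : F => (Algebra.trace (ZMod p) F) d) (fun a b => map_add (Algebra.trace (ZMod p) F) a b) hTrS x
    rw [ZMod.card, hcard] at h
    have hpm : p ^ (m - 1) * p = p ^ m := by
      rw [← pow_succ]; congr 1; omega
    exact Nat.eq_of_mul_eq_mul_right hp.pos (h.trans hpm.symm)
  have count2 : ∀ b : F, b ∉ Set.range (algebraMap (ZMod p) F) →
      (univ.filter fun d : F => (Algebra.trace (ZMod p) F) d = α ∧ (Algebra.trace (ZMod p) F) (b * d) = 0).card = p ^ (m - 2) := by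
    intro b hb
    have hsurj : Function.Surjective (fun d : F => ((Algebra.trace (ZMod p) F) d, (Algebra.trace (ZMod p) F) (b * d))) := by
      rintro ⟨x, y⟩
      obtain ⟨d, h1, h2⟩ := hpsi b hb x y
      exact ⟨d, by simp [h1, h2]⟩
    have h := fiber_card_mul (fun d : F => ((Algebra.trace (ZMod p) F) d, (Algebra.trace (ZMod p) F) (b * d)))
      (fun a e => by
        show ((Algebra.trace (ZMod p) F) (a + e), (Algebra.trace (ZMod p) F) (b * (a + e))) = _
        simp [mul_add, map_add, Prod.ext_iff]) hsurj (α, 0)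
    rw [Fintype.card_prod, ZMod.card, hcard] at h
    have heq : (univ.filter fun d : F => ((Algebra.trace (ZMod p) F) d, (Algebra.trace (ZMod p) F) (b * d)) = (α, 0))
        = univ.filter fun d : F => (Algebra.trace (ZMod p) F) d = α ∧ (Algebra.trace (ZMod p) F) (b * d) = 0 :=
      Finset.filter_congr fun d _ => by simp [Prod.ext_iff]
    rw [heq] at h
    have hpm : p ^ (m - 2) * (p * p) = p ^ m := by
      rw [← sq, ← pow_add]; congr 1; omega
    exact Nat.eq_of_mul_eq_mul_right (by positivity) (h.trans hpm.symm)
  have hT0 : (Algebra.trace (ZMod p) F) (0 : F) = 0 := map_zero (Algebra.trace (ZMod p) F)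
  have cardS : Fintype.card {d : F // d ≠ 0 ∧ (Algebra.trace (ZMod p) F) d = α} = p ^ (m - 1) := by
    rw [Fintype.card_subtype,
      show (univ.filter fun d : F => d ≠ 0 ∧ (Algebra.trace (ZMod p) F) d = α) = univ.filter fun d : F => (Algebra.trace (ZMod p) F) d = α
      from Finset.filter_congr fun d _ => ⟨fun h => h.2, fun h =>
        ⟨fun h0 => hα (by rw [← h, h0, hT0]), h⟩⟩]
    exact countTr α
  -- bridge between counts over the subtype and over F
  have bridge : ∀ (Q : F → Prop) (_ : DecidablePred Q),
      (univ.filter fun d : {d : F // d ≠ 0 ∧ (Algebra.trace (ZMod p) F) d = α} => Q d.1).card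
        = (univ.filter fun d : F => (Algebra.trace (ZMod p) F) d = α ∧ Q d).card := by
    intro Q _
    apply Finset.card_bij (fun d _ => d.1)
    · intro d hd
      simp only [mem_filter, mem_univ, true_and] at hd ⊢
      exact ⟨d.2.2, hd⟩
    · intro a _ b _ h
      exact Subtype.ext h
    · intro d hd
      simp only [mem_filter, mem_univ, true_and] at hd ⊢
      refine ⟨⟨d, fun h0 => hα (by rw [← hd.1, h0, hT0]), hd.1⟩, hd.2, rfl⟩
  -- hamming distance as a count
  have hHam : ∀ a₁ a₂ : F, hammingDist (c a₁) (c a₂)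
      = (univ.filter fun d : {d : F // d ≠ 0 ∧ (Algebra.trace (ZMod p) F) d = α} =>
          ¬ (Algebra.trace (ZMod p) F) ((a₁ - a₂) * d.1) = 0).card := by
    intro a₁ a₂
    have h0 : hammingDist (c a₁) (c a₂)
        = (univ.filter fun d : {d : F // d ≠ 0 ∧ (Algebra.trace (ZMod p) F) d = α} => ¬ c a₁ d = c a₂ d).card := rfl
    rw [h0]
    apply congrArg
    apply Finset.filter_congr
    intro d _
    rw [hc, hc, not_iff_not]
    constructor
    · intro h; rw [sub_mul, map_sub, h, sub_self]
    · intro h; have := sub_eq_zero.mp (by rwa [sub_mul, map_sub] at h); exact this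
  have distEq : ∀ b : F, b ∉ Set.range (algebraMap (ZMod p) F) →
      (univ.filter fun d : {d : F // d ≠ 0 ∧ (Algebra.trace (ZMod p) F) d = α} => ¬ (Algebra.trace (ZMod p) F) (b * d.1) = 0).card
        = p ^ (m - 2) * (p - 1) := by
    intro b hb
    have h1 := Finset.card_filter_add_card_filter_not
      (s := (univ : Finset {d : F // d ≠ 0 ∧ (Algebra.trace (ZMod p) F) d = α}))
      (p := fun d : {d : F // d ≠ 0 ∧ (Algebra.trace (ZMod p) F) d = α} => (Algebra.trace (ZMod p) F) (b * d.1) = 0)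
    rw [Finset.card_univ, cardS] at h1
    have h2 : (univ.filter fun d : {d : F // d ≠ 0 ∧ (Algebra.trace (ZMod p) F) d = α} => (Algebra.trace (ZMod p) F) (b * d.1) = 0).card
        = p ^ (m - 2) := by
      rw [bridge (fun d => (Algebra.trace (ZMod p) F) (b * d) = 0) inferInstance]
      exact count2 b hb
    have hpm : p ^ (m - 2) * (p - 1) + p ^ (m - 2) = p ^ (m - 1) := by
      have h3 : p ^ (m - 2) * p = p ^ (m - 1) := by
        rw [← pow_succ]; congr 1; omega
      calc p ^ (m - 2) * (p - 1) + p ^ (m - 2) = p ^ (m - 2) * ((p - 1) + 1) := by ring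
        _ = p ^ (m - 2) * p := by rw [show p - 1 + 1 = p from by omega]
        _ = p ^ (m - 1) := h3
    omega
  have distIn : ∀ lam : ZMod p, lam ≠ 0 →
      (univ.filter fun d : {d : F // d ≠ 0 ∧ (Algebra.trace (ZMod p) F) d = α} =>
        ¬ (Algebra.trace (ZMod p) F) (algebraMap (ZMod p) F lam * d.1) = 0).card = p ^ (m - 1) := by
    intro lam hlam
    have hall : ∀ d : {d : F // d ≠ 0 ∧ (Algebra.trace (ZMod p) F) d = α},
        ¬ (Algebra.trace (ZMod p) F) (algebraMap (ZMod p) F lam * d.1) = 0 := by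
      intro d h
      rw [← Algebra.smul_def, map_smul, smul_eq_mul, d.2.2] at h
      exact mul_ne_zero hlam hα h
    rw [Finset.filter_true_of_mem (fun d _ => hall d), Finset.card_univ, cardS]
  have hpos : 0 < p ^ (m - 2) * (p - 1) :=
    Nat.mul_pos (pow_pos hp.pos _) (by omega)
  -- injectivity of c
  have hne_of_ne : ∀ a₁ a₂ : F, a₁ ≠ a₂ → c a₁ ≠ c a₂ := by
    intro a₁ a₂ h hcc
    have hd0 : hammingDist (c a₁) (c a₂) = 0 := by rw [hcc, hammingDist_self]
    have hb : a₁ - a₂ ≠ 0 := sub_ne_zero_of_ne h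
    by_cases hr : (a₁ - a₂) ∈ Set.range (algebraMap (ZMod p) F)
    · obtain ⟨lam, hlam⟩ := hr
      have hlam0 : lam ≠ 0 := by
        rintro rfl; rw [map_zero] at hlam; exact hb hlam.symm
      have := hHam a₁ a₂
      rw [hd0] at this
      rw [← hlam] at this
      rw [distIn lam hlam0] at this
      have : (0:ℕ) < p ^ (m-1) := pow_pos hp.pos _
      omega
    · have := hHam a₁ a₂
      rw [hd0, distEq _ hr] at this
      omega
  have hinj : Function.Injective (algebraMap (ZMod p) F) := (algebraMap (ZMod p) F).injective
  refine ⟨?_, ?_, ?_⟩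
  · -- cardinality
    rw [Set.ncard_image_of_injOn (fun x _ y _ h => by
      by_contra hne; exact hne_of_ne x y hne h)]
    have hcompl : {a : F | a ∉ Set.range (algebraMap (ZMod p) F)}
        = (Set.range (algebraMap (ZMod p) F))ᶜ := rfl
    have hr : (Set.range (algebraMap (ZMod p) F)).ncard = p := by
      rw [← Nat.card_coe_set_eq, Nat.card_range_of_injective hinj,
        Nat.card_eq_fintype_card, ZMod.card]
    have hsum := Set.ncard_add_ncard_compl (Set.range (algebraMap (ZMod p) F))
    rw [hr, Nat.card_eq_fintype_card, hcard] at hsum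
    rw [hcompl]
    omega
  · -- minimum distance lower bound
    intro a₁ a₂ h1 h2 hne
    have hab : a₁ ≠ a₂ := fun h => hne (by rw [h])
    by_cases hr : (a₁ - a₂) ∈ Set.range (algebraMap (ZMod p) F)
    · obtain ⟨lam, hlam⟩ := hr
      have hlam0 : lam ≠ 0 := by
        rintro rfl; rw [map_zero] at hlam
        exact sub_ne_zero_of_ne hab hlam.symm
      rw [hHam, ← hlam, distIn lam hlam0]
      calc p ^ (m - 2) * (p - 1) ≤ p ^ (m - 2) * p := by
            apply Nat.mul_le_mul_left; omega
        _ = p ^ (m - 1) := by rw [← pow_succ]; congr 1; omega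
    · rw [hHam, distEq _ hr]
  · -- existence
    have htwoZ : (2 : ZMod p) ≠ 0 := by
      intro h
      have h2 : ((2 : ℕ) : ZMod p) = 0 := by push_cast; exact h
      rw [ZMod.natCast_eq_zero_iff] at h2
      have := Nat.le_of_dvd (by norm_num) h2
      omega
    have htwoF : algebraMap (ZMod p) F (2 : ZMod p) = (2 : F) := map_ofNat _ 2
    obtain ⟨x, hx⟩ : ∃ x : F, x ∉ Set.range (algebraMap (ZMod p) F) := by
      by_contra h
      push_neg at h
      have hsurj : Function.Surjective (algebraMap (ZMod p) F) := fun y => h y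
      have hle := Fintype.card_le_of_surjective _ hsurj
      rw [hcard, ZMod.card] at hle
      have : p ^ 2 ≤ p ^ m := Nat.pow_le_pow_right hp.pos hm
      have : p * p ≤ p ^ m := by rwa [← sq]
      nlinarith
    have hneg : -x ∉ Set.range (algebraMap (ZMod p) F) := by
      rintro ⟨l, hl⟩
      exact hx ⟨-l, by rw [map_neg, hl, neg_neg]⟩
    have hsub : x - -x ∉ Set.range (algebraMap (ZMod p) F) := by
      rintro ⟨l, hl⟩
      rw [sub_neg_eq_add, ← two_mul] at hl
      apply hx
      refine ⟨(2 : ZMod p)⁻¹ * l, ?_⟩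
      rw [map_mul, hl, ← mul_assoc, ← htwoF, ← map_mul, inv_mul_cancel₀ htwoZ, map_one, one_mul]
    have hxne : x ≠ -x := by
      intro h
      have h2 : (2 : F) * x = 0 := by rw [two_mul]; nth_rewrite 2 [h]; ring
      have h2F : (2 : F) ≠ 0 := by
        rw [← htwoF]
        exact fun hh => htwoZ (hinj (by rw [hh, map_zero]))
      have hx0 : x = 0 := by
        rcases mul_eq_zero.mp h2 with h | h
        · exact absurd h h2F
        · exact h
      exact hx ⟨0, by rw [map_zero, hx0]⟩
    refine ⟨x, -x, hx, hneg, hne_of_ne _ _ hxne, ?_⟩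
    rw [hHam, distEq _ hsub]
end

section
/- Let p be an odd prime and m ≥ 2. Set n = p^{m-1} - 1, d = p^{m-2}(p-1), M = p^{m-1} - 1, ω_0 = p^{m-2} - 1, and ω_β = p^{m-2} for each of the p-1 nonzero β ∈ F_p. Then n·d - n² + ω_0² + (p-1)·(p^{m-2})² > 0 and M · (n·d - n² + ω_0² + (p-1)·(p^{m-2})²) = n·d; that is, the constant composition code C_0' meets the LFVC bound M ≤ nd/(nd - n² + Σ_{β∈F_p} ω_β²) with equality. -/
/-!
Writing `q = p ^ (m - 2)`, one has `n = M = p q - 1`, `d = q (p - 1)` and `ω₀ = q - 1`, and the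
LFVC denominator `n d - n² + Σ_β ω_β²` collapses to `q (p - 1) = d`. It is positive since `p > 1`,
and `M d = n d` because `M = n`.
-/

theorem lfvc_denominator_eq {R : Type*} [CommRing R] (p q : R) :
    (p * q - 1) * (q * (p - 1)) - (p * q - 1) ^ 2 + (q - 1) ^ 2 + (p - 1) * q ^ 2
      = q * (p - 1) := by
  ring

theorem lfvc_optimal_general
    (p : ℕ) (hp : p.Prime) (m : ℕ) (hm : 2 ≤ m)
    (n d M ω₀ : ℤ)
    (hn : n = (p : ℤ) ^ (m - 1) - 1)
    (hd : d = (p : ℤ) ^ (m - 2) * (p - 1))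
    (hM : M = (p : ℤ) ^ (m - 1) - 1)
    (hω₀ : ω₀ = (p : ℤ) ^ (m - 2) - 1) :
    0 < n * d - n ^ 2 + ω₀ ^ 2 + ((p : ℤ) - 1) * ((p : ℤ) ^ (m - 2)) ^ 2 ∧
    M * (n * d - n ^ 2 + ω₀ ^ 2 + ((p : ℤ) - 1) * ((p : ℤ) ^ (m - 2)) ^ 2) = n * d := by
  obtain ⟨k, rfl⟩ : ∃ k, m = k + 2 := ⟨m - 2, by omega⟩
  rw [show k + 2 - 1 = k + 1 from rfl, pow_succ'] at hn hM
  rw [show k + 2 - 2 = k from rfl] at hd hω₀ ⊢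
  subst hn hd hM hω₀
  rw [lfvc_denominator_eq]
  have hp1 : (1 : ℤ) < p := by exact_mod_cast hp.one_lt
  exact ⟨mul_pos (pow_pos (by linarith) k) (by linarith), rfl⟩

/-- Let `p` be an odd prime and `m ≥ 2`. With `n = p^(m-1) - 1`, `d = p^(m-2)(p-1)`,
`M = p^(m-1) - 1`, `ω₀ = p^(m-2) - 1`, and `ω_β = p^(m-2)` for each of the `p - 1` nonzero
`β ∈ F_p`, the constant composition code `C_0'` meets the LFVC bound with equality:
`n·d - n² + ω₀² + (p-1)·(p^(m-2))² > 0` and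
`M · (n·d - n² + ω₀² + (p-1)·(p^(m-2))²) = n·d`. -/
theorem lfvc_optimal
    (p : ℕ) (hp : p.Prime) (hp2 : p ≠ 2) (m : ℕ) (hm : 2 ≤ m)
    (n d M ω₀ : ℤ)
    (hn : n = (p : ℤ) ^ (m - 1) - 1)
    (hd : d = (p : ℤ) ^ (m - 2) * (p - 1))
    (hM : M = (p : ℤ) ^ (m - 1) - 1)
    (hω₀ : ω₀ = (p : ℤ) ^ (m - 2) - 1) :
    0 < n * d - n ^ 2 + ω₀ ^ 2 + ((p : ℤ) - 1) * ((p : ℤ) ^ (m - 2)) ^ 2 ∧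
    M * (n * d - n ^ 2 + ω₀ ^ 2 + ((p : ℤ) - 1) * ((p : ℤ) ^ (m - 2)) ^ 2) = n * d :=
  lfvc_optimal_general p hp m hm n d M ω₀ hn hd hM hω₀
end
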